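/- Let k be a commutative ring and let f ∈ k[[X]] be a formal power series with f(0) = 1 satisfying f(X+Y) = f(X)·f(Y) in k[[X,Y]] (i.e. the image of f under substituting X+Y equals the product of the images of f under X and under Y). Then the formal derivative of f satisfies f' = c·f, where c is the coefficient of X in f. -/

import Mathlib

set_option linter.unnecessarySimpa false


open PowerSeries

namespace HKR

variable {k : Type*} [CommRing k]

/-- Substitution of a two-variable power series `g` (intended with zero constant
term) into a one-variable power series `f`, defined coefficientwise. -/
noncomputable def substMv (g : MvPowerSeries (Fin 2) k) (f : PowerSeries k) :
    MvPowerSeries (Fin 2) k :=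
  fun d => MvPowerSeries.coeff d
    (∑ n ∈ Finset.range (d 0 + d 1 + 1), PowerSeries.coeff n f • g ^ n)

/-- Composition `f ∘ g` of one-variable power series (`g` intended with zero
constant term), defined coefficientwise. -/
noncomputable def comp (f g : PowerSeries k) : PowerSeries k :=
  PowerSeries.mk fun n => PowerSeries.coeff n
    (∑ i ∈ Finset.range (n + 1), PowerSeries.coeff i f • g ^ i)

/-- The first variable `X` of `k[[X,Y]]`. -/
noncomputable abbrev Xv : MvPowerSeries (Fin 2) k := MvPowerSeries.X 0
/-- The second variable `Y` of `k[[X,Y]]`. -/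
noncomputable abbrev Yv : MvPowerSeries (Fin 2) k := MvPowerSeries.X 1

/-- `f` is a formal exponential: `f(0) = 1` and `f(X+Y) = f(X)·f(Y)` in `k[[X,Y]]`. -/
def IsExp (f : PowerSeries k) : Prop :=
  PowerSeries.constantCoeff f = 1 ∧
    substMv (Xv + Yv) f = substMv Xv f * substMv Yv f

lemma eq_single_zero_iff (e : Fin 2 →₀ ℕ) : e = Finsupp.single 0 (e 0) ↔ e 1 = 0 := by
  constructor
  · intro h
    conv_lhs => rw [h]
    simp [Finsupp.single_apply]
  · intro h; ext x; fin_cases x <;> simp [Finsupp.single_apply, h]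

lemma eq_single_one_iff (e : Fin 2 →₀ ℕ) : e = Finsupp.single 1 (e 1) ↔ e 0 = 0 := by
  constructor
  · intro h
    conv_lhs => rw [h]
    simp [Finsupp.single_apply]
  · intro h; ext x; fin_cases x <;> simp [Finsupp.single_apply, h]

lemma single_add_single_eq (n l j i : ℕ) :
    (Finsupp.single (0:Fin 2) n + Finsupp.single 1 l = Finsupp.single 0 j + Finsupp.single 1 i)
      ↔ (n = j ∧ l = i) := by
  constructor
  · intro h
    constructor
    · have := DFunLike.congr_fun h 0; simpa [Finsupp.single_apply] using this
    · have := DFunLike.congr_fun h 1; simpa [Finsupp.single_apply] using this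
  · rintro ⟨rfl, rfl⟩; rfl

lemma coeff_substMv (g : MvPowerSeries (Fin 2) k) (f : PowerSeries k) (d : Fin 2 →₀ ℕ) :
    MvPowerSeries.coeff d (substMv g f) = ∑ n ∈ Finset.range (d 0 + d 1 + 1),
      PowerSeries.coeff n f * MvPowerSeries.coeff d (g ^ n) := by
  rw [MvPowerSeries.coeff_apply, substMv, map_sum]
  simp [smul_eq_mul]

lemma coeff_substMv_X (f : PowerSeries k) (e : Fin 2 →₀ ℕ) :
    MvPowerSeries.coeff e (substMv Xv f) =
      if e 1 = 0 then PowerSeries.coeff (e 0) f else 0 := by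
  rw [coeff_substMv]
  simp only [MvPowerSeries.coeff_X_pow]
  rw [Finset.sum_eq_single (e 0)]
  · by_cases h : e 1 = 0
    · rw [if_pos ((eq_single_zero_iff e).2 h), if_pos h, mul_one]
    · rw [if_neg (fun hh => h ((eq_single_zero_iff e).1 hh)), if_neg h, mul_zero]
  · intro b _ hb
    rw [if_neg, mul_zero]
    intro hcond
    apply hb
    have := DFunLike.congr_fun hcond 0
    simp [Finsupp.single_apply] at this
    omega
  · intro h
    exact absurd (Finset.mem_range.2 (by omega)) h

lemma coeff_substMv_Y (f : PowerSeries k) (e : Fin 2 →₀ ℕ) :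
    MvPowerSeries.coeff e (substMv Yv f) =
      if e 0 = 0 then PowerSeries.coeff (e 1) f else 0 := by
  rw [coeff_substMv]
  simp only [MvPowerSeries.coeff_X_pow]
  rw [Finset.sum_eq_single (e 1)]
  · by_cases h : e 0 = 0
    · rw [if_pos ((eq_single_one_iff e).2 h), if_pos h, mul_one]
    · rw [if_neg (fun hh => h ((eq_single_one_iff e).1 hh)), if_neg h, mul_zero]
  · intro b _ hb
    rw [if_neg, mul_zero]
    intro hcond
    apply hb
    have := DFunLike.congr_fun hcond 1
    simp [Finsupp.single_apply] at this
    omega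
  · intro h
    exact absurd (Finset.mem_range.2 (by omega)) h

lemma coeff_XY_pow (n l m : ℕ) :
    MvPowerSeries.coeff (Finsupp.single 0 n + Finsupp.single 1 l)
      ((Xv + Yv : MvPowerSeries (Fin 2) k) ^ m) =
      if m = n + l then (m.choose n : k) else 0 := by
  rw [add_pow, map_sum]
  have hterm : ∀ j, MvPowerSeries.coeff (Finsupp.single 0 n + Finsupp.single 1 l)
      ((Xv : MvPowerSeries (Fin 2) k) ^ j * Yv ^ (m - j) * (m.choose j : MvPowerSeries (Fin 2) k)) =
      if n = j ∧ l = m - j then (m.choose j : k) else 0 := by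
    intro j
    rw [MvPowerSeries.X_pow_eq, MvPowerSeries.X_pow_eq, MvPowerSeries.monomial_mul_monomial,
      one_mul, ← map_natCast ((MvPowerSeries.C (σ := Fin 2) (R := k))), MvPowerSeries.coeff_mul_C,
      MvPowerSeries.coeff_monomial]
    by_cases hc : n = j ∧ l = m - j
    · rw [if_pos ((single_add_single_eq n l j (m-j)).2 hc), if_pos hc, one_mul]
    · rw [if_neg (fun h => hc ((single_add_single_eq n l j (m-j)).1 h)), if_neg hc, zero_mul]
  simp only [hterm]
  by_cases hm : m = n + l
  · rw [if_pos hm]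
    rw [Finset.sum_eq_single n]
    · rw [if_pos ⟨rfl, by omega⟩]
    · intro b _ hb
      rw [if_neg (fun h => hb h.1.symm)]
    · intro h
      exact absurd (Finset.mem_range.2 (by omega)) h
  · rw [if_neg hm]
    apply Finset.sum_eq_zero
    intro j hj
    rw [Finset.mem_range] at hj
    rw [if_neg]
    rintro ⟨rfl, rfl⟩
    omega

lemma key (f : PowerSeries k) (hf : IsExp f) (n : ℕ) :
    PowerSeries.coeff (n + 1) f * (n + 1) =
      PowerSeries.coeff 1 f * PowerSeries.coeff n f := by
  set d : Fin 2 →₀ ℕ := Finsupp.single 0 n + Finsupp.single 1 1 with hd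
  have hd0 : d 0 = n := by simp [hd, Finsupp.single_apply]
  have hd1 : d 1 = 1 := by simp [hd, Finsupp.single_apply]
  have h := congrArg (MvPowerSeries.coeff d) hf.2
  -- left side
  rw [coeff_substMv, hd0, hd1] at h
  have hL : ∑ m ∈ Finset.range (n + 1 + 1), PowerSeries.coeff m f *
      MvPowerSeries.coeff d ((Xv + Yv : MvPowerSeries (Fin 2) k) ^ m) =
      PowerSeries.coeff (n + 1) f * (n + 1) := by
    rw [hd]
    simp only [coeff_XY_pow, mul_ite, mul_zero]
    rw [Finset.sum_ite_eq' (Finset.range (n + 1 + 1)) (n + 1)]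
    rw [if_pos (Finset.mem_range.2 (by omega)), Nat.choose_succ_self_right]
    push_cast
    ring
  rw [hL] at h
  -- right side
  have hR : MvPowerSeries.coeff d (substMv Xv f * substMv Yv f) =
      PowerSeries.coeff n f * PowerSeries.coeff 1 f := by
    classical
    rw [MvPowerSeries.coeff_mul]
    rw [Finset.sum_eq_single ((Finsupp.single 0 n : Fin 2 →₀ ℕ), (Finsupp.single 1 1 : Fin 2 →₀ ℕ))]
    · rw [coeff_substMv_X, coeff_substMv_Y]
      rw [if_pos (by simp [Finsupp.single_apply]), if_pos (by simp [Finsupp.single_apply])]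
      simp [Finsupp.single_apply]
    · rintro ⟨p, q⟩ hmem hne
      rw [Finset.HasAntidiagonal.mem_antidiagonal] at hmem
      rw [coeff_substMv_X, coeff_substMv_Y]
      by_cases h1 : p 1 = 0
      · by_cases h2 : q 0 = 0
        · exfalso
          apply hne
          have e0 : p 0 + q 0 = n := by
            have := DFunLike.congr_fun hmem 0
            simpa [hd0] using this
          have e1 : p 1 + q 1 = 1 := by
            have := DFunLike.congr_fun hmem 1
            simpa [hd1] using this
          have hp : p = Finsupp.single 0 n := by
            rw [(eq_single_zero_iff p).2 h1]
            congr 1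
            omega
          have hq : q = Finsupp.single 1 1 := by
            rw [(eq_single_one_iff q).2 h2]
            congr 1
            omega
          exact Prod.ext hp hq
        · rw [if_neg h2, mul_zero]
      · rw [if_neg h1, zero_mul]
    · intro h
      exfalso
      apply h
      rw [Finset.HasAntidiagonal.mem_antidiagonal]
  rw [hR] at h
  have h0 : PowerSeries.coeff 0 f = 1 := by
    rw [PowerSeries.coeff_zero_eq_constantCoeff]; exact hf.1
  cases n with
  | zero =>
    simp only [h0, mul_one] at h ⊢
    simpa using h
  | succ m =>
    rw [h]
    ring
  
end HKR

open HKR in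
theorem stmt_0 {k : Type*} [CommRing k] (f : PowerSeries k) (hf : IsExp f) :
    PowerSeries.derivativeFun f = PowerSeries.C (PowerSeries.coeff 1 f) * f := by
  ext n
  rw [show PowerSeries.derivativeFun f = PowerSeries.derivative k f from rfl, PowerSeries.coeff_derivative, PowerSeries.coeff_C_mul]
  exact key f hf n
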